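/- arXiv:2108.04004 — 3 statements merged into one kernel-verified Lean document; each statement's English description precedes it below -/
import Mathlib

section
/- Let Q = (xy − z²)(xy + z²)(x² + y² − 2z²)(x² + y² + 2z²) ∈ ℂ[x,y,z]. Then the set of points of the complex projective plane (nonzero triples (x:y:z) in ℂ³ up to nonzero scalar) at which all three partial derivatives ∂Q/∂x, ∂Q/∂y, ∂Q/∂z vanish has exactly 12 elements. -/
/-!
Write `A = x²y² − z⁴` (the product of the first two conics), `D = x² − y²` and
`E = D² + 8A`. Then `∂Q/∂x = 2x(y²E + 2DA)`, `∂Q/∂y = 2y(x²E − 2DA)` and `∂Q/∂z = −4z³E`.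
Off the line `z = 0` the gradient vanishes iff `E = DA = 0`, i.e. `D = A = 0`, which gives the
eight points `[1 : ±1 : ±1]`, `[1 : ±1 : ±i]`; on `z = 0` it vanishes iff `xy(x² + y²) = 0`, which
gives `[1 : 0 : 0]`, `[0 : 1 : 0]`, `[1 : ±i : 0]`. The partial derivatives are homogeneous, so
their vanishing does not depend on the chosen representative of a projective point.
-/

open MvPolynomial

theorem MvPolynomial.IsHomogeneous.eval_smul {R σ : Type*} [CommSemiring R]
    {φ : MvPolynomial σ R} {n : ℕ} (hφ : φ.IsHomogeneous n) (c : R) (x : σ → R) :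
    eval (c • x) φ = c ^ n * eval x φ := by
  conv_lhs => rw [φ.as_sum]
  conv_rhs => rw [φ.as_sum]
  rw [map_sum, map_sum, Finset.mul_sum]
  refine Finset.sum_congr rfl fun d hd => ?_
  have hdeg : d.degree = n := by
    rw [Finsupp.degree_eq_weight_one]; exact hφ (mem_support_iff.mp hd)
  simp only [eval_monomial, Pi.smul_apply, smul_eq_mul, mul_pow, Finsupp.prod_mul]
  rw [← hdeg, Finsupp.degree_apply, Finsupp.prod, Finsupp.prod, Finset.prod_pow_eq_pow_sum]
  ring

theorem MvPolynomial.IsHomogeneous.eval_mk_rep_eq_zero_iff {K σ : Type*} [Field K]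
    {φ : MvPolynomial σ K} {n : ℕ} (hφ : φ.IsHomogeneous n) {v : σ → K} (hv : v ≠ 0) :
    eval (Projectivization.mk K v hv).rep φ = 0 ↔ eval v φ = 0 := by
  obtain ⟨a, ha⟩ := Projectivization.exists_smul_eq_mk_rep K v hv
  rw [← ha, Units.smul_def, hφ.eval_smul, mul_eq_zero_iff_left (pow_ne_zero _ a.ne_zero)]

theorem MvPolynomial.pderiv_ofNat {R σ : Type*} [CommSemiring R] (i : σ) (n : ℕ)
    [n.AtLeastTwo] : pderiv i (ofNat(n) : MvPolynomial σ R) = 0 := by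
  rw [← map_ofNat C n, pderiv_C]

def projectiveSingularLocus {K σ : Type*} [Field K] (F : MvPolynomial σ K) :
    Set (Projectivization K (σ → K)) :=
  {p | ∀ i, eval p.rep (pderiv i F) = 0}

theorem mk_mem_projectiveSingularLocus_iff {K σ : Type*} [Field K] {F : MvPolynomial σ K}
    {n : ℕ} (hF : F.IsHomogeneous n) {v : σ → K} (hv : v ≠ 0) :
    Projectivization.mk K v hv ∈ projectiveSingularLocus F ↔ ∀ i, eval v (pderiv i F) = 0 :=
  forall_congr' fun _ => hF.pderiv.eval_mk_rep_eq_zero_iff hv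

noncomputable def fourConics (R : Type*) [CommRing R] : MvPolynomial (Fin 3) R :=
  (X 0 * X 1 - X 2 ^ 2) * (X 0 * X 1 + X 2 ^ 2) *
    (X 0 ^ 2 + X 1 ^ 2 - 2 * X 2 ^ 2) * (X 0 ^ 2 + X 1 ^ 2 + 2 * X 2 ^ 2)

section CommRing

variable {R : Type*} [CommRing R]

theorem isHomogeneous_fourConics : (fourConics R).IsHomogeneous 8 := by
  have hX (i : Fin 3) : (X i : MvPolynomial (Fin 3) R).IsHomogeneous 1 := isHomogeneous_X R i
  have h2 : (2 : MvPolynomial (Fin 3) R).IsHomogeneous 0 := isHomogeneous_C _ 2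
  exact ((((hX 0).mul (hX 1)).sub ((hX 2).pow 2)).mul (((hX 0).mul (hX 1)).add ((hX 2).pow 2))
    |>.mul ((((hX 0).pow 2).add ((hX 1).pow 2)).sub (h2.mul ((hX 2).pow 2))))
    |>.mul ((((hX 0).pow 2).add ((hX 1).pow 2)).add (h2.mul ((hX 2).pow 2)))

theorem eval_pderiv_fourConics (x y z : R) :
    eval ![x, y, z] (pderiv 0 (fourConics R)) =
      2 * x * (y ^ 2 * ((x ^ 2 - y ^ 2) ^ 2 + 8 * (x ^ 2 * y ^ 2 - z ^ 4)) +
        2 * (x ^ 2 - y ^ 2) * (x ^ 2 * y ^ 2 - z ^ 4)) ∧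
    eval ![x, y, z] (pderiv 1 (fourConics R)) =
      2 * y * (x ^ 2 * ((x ^ 2 - y ^ 2) ^ 2 + 8 * (x ^ 2 * y ^ 2 - z ^ 4)) -
        2 * (x ^ 2 - y ^ 2) * (x ^ 2 * y ^ 2 - z ^ 4)) ∧
    eval ![x, y, z] (pderiv 2 (fourConics R)) =
      -4 * z ^ 3 * ((x ^ 2 - y ^ 2) ^ 2 + 8 * (x ^ 2 * y ^ 2 - z ^ 4)) := by
  refine ⟨?_, ?_, ?_⟩ <;>
  simp only [fourConics, Derivation.leibniz, Derivation.leibniz_pow, map_add, map_sub, map_mul,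
    map_pow, pderiv_X_self, pderiv_X_of_ne, pderiv_ofNat, ne_eq, Fin.reduceEq, not_false_eq_true,
    eval_X, eval_ofNat, map_one, map_zero, smul_eq_mul, nsmul_eq_mul, Nat.cast_ofNat,
    Matrix.cons_val] <;>
  ring

end CommRing

namespace FourConics

section Field

variable {K : Type*} [Field K] [CharZero K] {x y z : K}

theorem mul_mul_sq_add_sq_eq_zero (h0 : x * y * (x ^ 2 + y ^ 2) * (y * (3 * x ^ 2 + y ^ 2)) = 0)
    (h1 : x * y * (x ^ 2 + y ^ 2) * (x * (x ^ 2 + 3 * y ^ 2)) = 0) :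
    x * y * (x ^ 2 + y ^ 2) = 0 := by
  by_contra hxy
  have hx : x ≠ 0 := by rintro rfl; simp at hxy
  have hy : y ≠ 0 := by rintro rfl; simp at hxy
  have h3x := (mul_eq_zero.1 ((mul_eq_zero.1 h0).resolve_left hxy)).resolve_left hy
  have h3y := (mul_eq_zero.1 ((mul_eq_zero.1 h1).resolve_left hxy)).resolve_left hx
  exact hx (pow_eq_zero_iff two_ne_zero |>.1 (by linear_combination (3 * h3x - h3y) / 8))

theorem sq_eq_sq_and_pow_four_eq_of_ne_zero (hz : z ≠ 0)
    (h0 : x * (y ^ 2 * ((x ^ 2 - y ^ 2) ^ 2 + 8 * (x ^ 2 * y ^ 2 - z ^ 4)) +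
      2 * (x ^ 2 - y ^ 2) * (x ^ 2 * y ^ 2 - z ^ 4)) = 0)
    (h1 : y * (x ^ 2 * ((x ^ 2 - y ^ 2) ^ 2 + 8 * (x ^ 2 * y ^ 2 - z ^ 4)) -
      2 * (x ^ 2 - y ^ 2) * (x ^ 2 * y ^ 2 - z ^ 4)) = 0)
    (h2 : z ^ 3 * ((x ^ 2 - y ^ 2) ^ 2 + 8 * (x ^ 2 * y ^ 2 - z ^ 4)) = 0) :
    y ^ 2 = x ^ 2 ∧ z ^ 4 = x ^ 4 := by
  have hE : (x ^ 2 - y ^ 2) ^ 2 + 8 * (x ^ 2 * y ^ 2 - z ^ 4) = 0 :=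
    (mul_eq_zero.1 h2).resolve_left (pow_ne_zero 3 hz)
  have hDA : (x ^ 2 - y ^ 2) * (x ^ 2 * y ^ 2 - z ^ 4) = 0 := by
    by_contra hDA
    have hx : x = 0 := (mul_eq_zero.1
      (by linear_combination h0 / 2 - x * y ^ 2 / 2 * hE)).resolve_right hDA
    have hy : y = 0 := (mul_eq_zero.1
      (by linear_combination -h1 / 2 + x ^ 2 * y / 2 * hE)).resolve_right hDA
    subst hx hy
    exact hz (pow_eq_zero_iff four_ne_zero |>.1 (by linear_combination -hE / 8))
  have hD : x ^ 2 - y ^ 2 = 0 := by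
    rcases mul_eq_zero.1 hDA with hD | hA
    · exact hD
    · exact pow_eq_zero_iff two_ne_zero |>.1 (by linear_combination hE - 8 * hA)
  exact ⟨by linear_combination -hD,
    by linear_combination -hE / 8 + ((x ^ 2 - y ^ 2) / 8 - x ^ 2) * hD⟩

end Field

end FourConics

theorem forall_eval_pderiv_fourConics_eq_zero_iff {K : Type*} [Field K] [CharZero K]
    {x y z : K} :
    (∀ i, eval ![x, y, z] (pderiv i (fourConics K)) = 0) ↔
      (z = 0 ∧ x * y * (x ^ 2 + y ^ 2) = 0) ∨ (y ^ 2 = x ^ 2 ∧ z ^ 4 = x ^ 4) := by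
  obtain ⟨e0, e1, e2⟩ := eval_pderiv_fourConics x y z
  rw [Fin.forall_fin_succ, Fin.forall_fin_two, Fin.succ_zero_eq_one, Fin.succ_one_eq_two,
    e0, e1, e2]
  constructor
  · rintro ⟨h0, h1, h2⟩
    by_cases hz : z = 0
    · subst hz
      exact Or.inl ⟨rfl, FourConics.mul_mul_sq_add_sq_eq_zero
        (by linear_combination h0 / 2) (by linear_combination h1 / 2)⟩
    · exact Or.inr (FourConics.sq_eq_sq_and_pow_four_eq_of_ne_zero hz
        (by linear_combination h0 / 2) (by linear_combination h1 / 2)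
        (by linear_combination -h2 / 4))
  · rintro (⟨rfl, h⟩ | ⟨hy, hz⟩)
    · exact ⟨by linear_combination 2 * y * (3 * x ^ 2 + y ^ 2) * h,
        by linear_combination 2 * x * (x ^ 2 + 3 * y ^ 2) * h, by ring⟩
    · have hD : x ^ 2 - y ^ 2 = 0 := by linear_combination -hy
      have hA : x ^ 2 * y ^ 2 - z ^ 4 = 0 := by linear_combination x ^ 2 * hy - hz
      simp [hD, hA]

namespace FourConics

open Complex

/-- Consecutive pairs are the two tangency points of `C₁ ∩ C₂`, `C₃ ∩ C₄`, `C₁ ∩ C₃`,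
`C₂ ∩ C₃`, `C₂ ∩ C₄` and `C₁ ∩ C₄`. -/
noncomputable def tacnodeVec : Fin 12 → Fin 3 → ℂ :=
  ![![1, 0, 0], ![0, 1, 0], ![1, I, 0], ![1, -I, 0], ![1, 1, 1], ![1, 1, -1],
    ![1, -1, 1], ![1, -1, -1], ![1, 1, I], ![1, 1, -I], ![1, -1, I], ![1, -1, -I]]

theorem tacnodeVec_ne_zero (j : Fin 12) : tacnodeVec j ≠ 0 := by
  fin_cases j <;> simp [tacnodeVec]

noncomputable def tacnode (j : Fin 12) : Projectivization ℂ (Fin 3 → ℂ) :=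
  Projectivization.mk ℂ (tacnodeVec j) (tacnodeVec_ne_zero j)

theorem tacnode_injective : Function.Injective tacnode := by
  intro i j h
  rw [tacnode, tacnode, Projectivization.mk_eq_mk_iff_crossProduct_eq_zero] at h
  fin_cases i <;> fin_cases j <;>
    first
      | rfl
      | norm_num [tacnodeVec, crossProduct, Matrix.cons_val_two, Complex.ext_iff] at h

theorem forall_eval_pderiv_tacnodeVec_eq_zero (j : Fin 12) :
    ∀ i, eval (tacnodeVec j) (pderiv i (fourConics ℂ)) = 0 := by
  fin_cases j <;> simp only [tacnodeVec, Fin.reduceFinMk, Matrix.cons_val] <;>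
    rw [forall_eval_pderiv_fourConics_eq_zero_iff] <;> norm_num

theorem exists_smul_tacnodeVec_eq {x y z : ℂ}
    (h : (z = 0 ∧ x * y * (x ^ 2 + y ^ 2) = 0) ∨ (y ^ 2 = x ^ 2 ∧ z ^ 4 = x ^ 4)) :
    ∃ j, ∃ c : ℂ, c • tacnodeVec j = ![x, y, z] := by
  rcases h with ⟨rfl, h⟩ | ⟨hy, hz⟩
  · have : x = 0 ∨ y = 0 ∨ y = I * x ∨ y = -(I * x) := by
      simpa [sub_eq_zero, add_eq_zero_iff_eq_neg, or_assoc] using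
        (show x * y * ((y - I * x) * (y + I * x)) = 0 by
          linear_combination h - x ^ 3 * y * I_sq)
    rcases this with rfl | rfl | rfl | rfl
    exacts [⟨1, y, by simp [tacnodeVec]⟩, ⟨0, x, by simp [tacnodeVec]⟩,
      ⟨2, x, by simp [tacnodeVec, mul_comm]⟩, ⟨3, x, by simp [tacnodeVec, mul_comm]⟩]
  · have hy : y = x ∨ y = -x := sq_eq_sq_iff_eq_or_eq_neg.1 hy
    have hz : z = x ∨ z = -x ∨ z = I * x ∨ z = -(I * x) := by
      simpa [sub_eq_zero, add_eq_zero_iff_eq_neg, or_assoc] using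
        (show (z - x) * (z + x) * ((z - I * x) * (z + I * x)) = 0 by
          linear_combination hz - x ^ 2 * (z ^ 2 - x ^ 2) * I_sq)
    rcases hy with hy | hy <;> rcases hz with hz | hz | hz | hz
    exacts [⟨4, x, by simp [tacnodeVec, hy, hz]⟩, ⟨5, x, by simp [tacnodeVec, hy, hz]⟩,
      ⟨8, x, by simp [tacnodeVec, hy, hz, mul_comm]⟩,
      ⟨9, x, by simp [tacnodeVec, hy, hz, mul_comm]⟩,
      ⟨6, x, by simp [tacnodeVec, hy, hz]⟩, ⟨7, x, by simp [tacnodeVec, hy, hz]⟩,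
      ⟨10, x, by simp [tacnodeVec, hy, hz, mul_comm]⟩,
      ⟨11, x, by simp [tacnodeVec, hy, hz, mul_comm]⟩]

end FourConics

open FourConics in
theorem projectiveSingularLocus_fourConics :
    projectiveSingularLocus (fourConics ℂ) = Set.range tacnode := by
  ext p
  constructor
  · induction p using Projectivization.ind with
    | h v hv =>
      intro hp
      obtain ⟨x, y, z, rfl⟩ : ∃ x y z, v = ![x, y, z] :=
        ⟨v 0, v 1, v 2, by ext i; fin_cases i <;> rfl⟩
      rw [mk_mem_projectiveSingularLocus_iff isHomogeneous_fourConics,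
        forall_eval_pderiv_fourConics_eq_zero_iff] at hp
      obtain ⟨j, c, hc⟩ := exists_smul_tacnodeVec_eq hp
      exact ⟨j, ((Projectivization.mk_eq_mk_iff' ℂ _ _ hv _).2 ⟨c, hc⟩).symm⟩
  · rintro ⟨j, rfl⟩
    exact (mk_mem_projectiveSingularLocus_iff isHomogeneous_fourConics _).2
      (forall_eval_pderiv_tacnodeVec_eq_zero j)

/-- The arrangement of four conics `xy − z²`, `xy + z²`, `x² + y² − 2z²`, `x² + y² + 2z²`
has exactly 12 singular points in the complex projective plane: the common vanishing locus
of the three partial derivatives of the product `Q` has exactly 12 elements. -/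
theorem four_conic_arrangement_twelve_singular_points :
    {p : Projectivization ℂ (Fin 3 → ℂ) |
        ∀ i : Fin 3,
          eval p.rep (pderiv i
            ((X 0 * X 1 - X 2 ^ 2) * (X 0 * X 1 + X 2 ^ 2) *
              (X 0 ^ 2 + X 1 ^ 2 - 2 * X 2 ^ 2) * (X 0 ^ 2 + X 1 ^ 2 + 2 * X 2 ^ 2) :
              MvPolynomial (Fin 3) ℂ)) = 0}.ncard = 12 := by
  change (projectiveSingularLocus (fourConics ℂ)).ncard = 12
  rw [projectiveSingularLocus_fourConics, Set.ncard_range_of_injective FourConics.tacnode_injective,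
    Nat.card_fin]
end

section
/- Let r ∈ ℂ with r ∉ {0, 1, −1}, and let Q = (x² + y² − z²)(x² + r²y² − r²z²) ∈ ℂ[x,y,z]. Then the set of points of the complex projective plane at which all three partial derivatives ∂Q/∂x, ∂Q/∂y, ∂Q/∂z vanish consists of exactly the two points (0:1:1) and (0:1:−1). -/
open MvPolynomial


lemma evals (r : ℂ) (v : Fin 3 → ℂ) :
    (∀ i : Fin 3, eval v (pderiv i
            ((X 0 ^ 2 + X 1 ^ 2 - X 2 ^ 2) *
              (X 0 ^ 2 + C (r ^ 2) * X 1 ^ 2 - C (r ^ 2) * X 2 ^ 2) :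
              MvPolynomial (Fin 3) ℂ)) = 0) ↔
    (2 * v 0 * ((v 0 ^ 2 + v 1 ^ 2 - v 2 ^ 2) + (v 0 ^ 2 + r ^ 2 * v 1 ^ 2 - r ^ 2 * v 2 ^ 2)) = 0 ∧
     2 * v 1 * ((v 0 ^ 2 + r ^ 2 * v 1 ^ 2 - r ^ 2 * v 2 ^ 2) + r ^ 2 * (v 0 ^ 2 + v 1 ^ 2 - v 2 ^ 2)) = 0 ∧
     2 * v 2 * ((v 0 ^ 2 + r ^ 2 * v 1 ^ 2 - r ^ 2 * v 2 ^ 2) + r ^ 2 * (v 0 ^ 2 + v 1 ^ 2 - v 2 ^ 2)) = 0) := by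
  constructor
  · intro h
    refine ⟨?_, ?_, ?_⟩
    · have := h 0; simp [pderiv_mul, pderiv_X] at this; linear_combination this
    · have := h 1; simp [pderiv_mul, pderiv_X] at this; linear_combination this
    · have := h 2; simp [pderiv_mul, pderiv_X] at this; linear_combination -this
  · rintro ⟨h0, h1, h2⟩ i
    fin_cases i <;> simp [pderiv_mul, pderiv_X] <;>
      [linear_combination h0; linear_combination h1; linear_combination -h2]

lemma alg (r a b c : ℂ) (hr0 : r ≠ 0) (hr1 : r ≠ 1) (hrm1 : r ≠ -1)
    (hv : ¬(a = 0 ∧ b = 0 ∧ c = 0))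
    (h0 : 2 * a * ((a ^ 2 + b ^ 2 - c ^ 2) + (a ^ 2 + r ^ 2 * b ^ 2 - r ^ 2 * c ^ 2)) = 0)
    (h1 : 2 * b * ((a ^ 2 + r ^ 2 * b ^ 2 - r ^ 2 * c ^ 2) + r ^ 2 * (a ^ 2 + b ^ 2 - c ^ 2)) = 0)
    (h2 : 2 * c * ((a ^ 2 + r ^ 2 * b ^ 2 - r ^ 2 * c ^ 2) + r ^ 2 * (a ^ 2 + b ^ 2 - c ^ 2)) = 0) :
    a = 0 ∧ b ≠ 0 ∧ (c = b ∨ c = -b) := by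
  have hr2 : r ^ 2 - 1 ≠ 0 := by
    intro h
    rcases mul_eq_zero.mp (show (r - 1) * (r + 1) = 0 by linear_combination h) with h' | h'
    · exact hr1 (sub_eq_zero.mp h')
    · exact hrm1 (eq_neg_of_add_eq_zero_left h')
  set K : ℂ := (a ^ 2 + r ^ 2 * b ^ 2 - r ^ 2 * c ^ 2) + r ^ 2 * (a ^ 2 + b ^ 2 - c ^ 2) with hK
  by_cases hKz : K = 0
  · -- main case
    have ha : a = 0 := by
      -- from h0 : 2a(F+G)=0, and K=0 gives G = -r² F, so F+G = (1-r²)F; combined with F=0 or a=0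
      -- derive aF = 0 then a = 0.
      by_contra ha
      have hFG : (a ^ 2 + b ^ 2 - c ^ 2) + (a ^ 2 + r ^ 2 * b ^ 2 - r ^ 2 * c ^ 2) = 0 := by
        rcases mul_eq_zero.mp h0 with h | h
        · rcases mul_eq_zero.mp h with h | h
          · norm_num at h
          · exact absurd h ha
        · exact h
      -- K = G + r²F = 0, F + G = 0 ⇒ G = -F, so -F + r²F = 0 ⇒ (r²-1)F = 0 ⇒ F = 0.
      have hF : a ^ 2 + b ^ 2 - c ^ 2 = 0 := by
        have h3 : (r ^ 2 - 1) * (a ^ 2 + b ^ 2 - c ^ 2) = 0 := by linear_combination hKz - hFG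
        rcases mul_eq_zero.mp h3 with h | h
        · exact absurd h hr2
        · exact h
      have hG : a ^ 2 + r ^ 2 * b ^ 2 - r ^ 2 * c ^ 2 = 0 := by linear_combination hKz - r^2 * hF
      have : (1 - r ^ 2) * a ^ 2 = 0 := by linear_combination hG - r^2 * hF
      rcases mul_eq_zero.mp this with h | h
      · exact hr2 (by linear_combination -h)
      · exact ha (pow_eq_zero_iff (by norm_num) |>.mp h)
    subst ha
    have hbc : b ^ 2 - c ^ 2 = 0 := by
      have : 2 * r ^ 2 * (b ^ 2 - c ^ 2) = 0 := by linear_combination hKz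
      rcases mul_eq_zero.mp this with h | h
      · rcases mul_eq_zero.mp h with h | h
        · norm_num at h
        · exact absurd (pow_eq_zero_iff (by norm_num) |>.mp h) hr0
      · exact h
    have hb : b ≠ 0 := by
      intro hb
      subst hb
      have : c = 0 := by
        have : c ^ 2 = 0 := by linear_combination -hbc
        exact pow_eq_zero_iff (by norm_num) |>.mp this
      exact hv ⟨rfl, rfl, this⟩
    refine ⟨rfl, hb, ?_⟩
    rcases mul_eq_zero.mp (show (c - b) * (c + b) = 0 by linear_combination hbc * (-1)) with h | h
    · exact Or.inl (sub_eq_zero.mp h)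
    · exact Or.inr (eq_neg_of_add_eq_zero_left h)
  · -- K ≠ 0 ⇒ b = c = 0 ⇒ a = 0 contradiction
    exfalso
    have hb : b = 0 := by
      rcases mul_eq_zero.mp h1 with h | h
      · rcases mul_eq_zero.mp h with h | h
        · norm_num at h
        · exact h
      · exact absurd h hKz
    have hc : c = 0 := by
      rcases mul_eq_zero.mp h2 with h | h
      · rcases mul_eq_zero.mp h with h | h
        · norm_num at h
        · exact h
      · exact absurd h hKz
    subst hb; subst hc
    have ha : a = 0 := by
      have : 2 * a * (2 * a ^ 2) = 0 := by linear_combination h0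
      have : a ^ 3 = 0 := by linear_combination this / 4
      exact pow_eq_zero_iff (by norm_num) |>.mp this
    exact hv ⟨ha, rfl, rfl⟩

/-- Megyesi's two-conic arrangement: for `r ∉ {0, 1, −1}` the singular locus of
`Q = (x² + y² − z²)(x² + r²y² − r²z²)` in the complex projective plane consists of exactly
the two points `(0:1:1)` and `(0:1:−1)` (the two tacnodes). -/
theorem two_conic_arrangement_singular_points (r : ℂ) (hr0 : r ≠ 0) (hr1 : r ≠ 1)
    (hrm1 : r ≠ -1) :
    {p : Projectivization ℂ (Fin 3 → ℂ) |
        ∀ i : Fin 3,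
          eval p.rep (pderiv i
            ((X 0 ^ 2 + X 1 ^ 2 - X 2 ^ 2) *
              (X 0 ^ 2 + C (r ^ 2) * X 1 ^ 2 - C (r ^ 2) * X 2 ^ 2) :
              MvPolynomial (Fin 3) ℂ)) = 0} =
      {Projectivization.mk ℂ ![0, 1, 1] (fun h => by simpa using congrFun h 1),
        Projectivization.mk ℂ ![0, 1, -1] (fun h => by simpa using congrFun h 1)} := by
  ext p
  simp only [Set.mem_setOf_eq, Set.mem_insert_iff, Set.mem_singleton_iff]
  rw [evals r p.rep]
  have hrep := Projectivization.rep_nonzero p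
  constructor
  · rintro ⟨h0, h1, h2⟩
    have hv : ¬(p.rep 0 = 0 ∧ p.rep 1 = 0 ∧ p.rep 2 = 0) := by
      rintro ⟨ha, hb, hc⟩
      apply hrep
      funext i; fin_cases i <;> assumption
    obtain ⟨ha, hb, hc⟩ := alg r _ _ _ hr0 hr1 hrm1 hv h0 h1 h2
    rcases hc with hc | hc
    · left
      rw [← Projectivization.mk_rep p, Projectivization.mk_eq_mk_iff]
      refine ⟨Units.mk0 (p.rep 1) hb, ?_⟩
      funext i; fin_cases i <;> simp [Units.smul_def, ha, hc]
    · right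
      rw [← Projectivization.mk_rep p, Projectivization.mk_eq_mk_iff]
      refine ⟨Units.mk0 (p.rep 1) hb, ?_⟩
      funext i; fin_cases i <;> simp [Units.smul_def, ha, hc]
  · intro h
    rcases h with h | h <;>
    · rw [← Projectivization.mk_rep p, Projectivization.mk_eq_mk_iff] at h
      obtain ⟨u, hu⟩ := h
      have h0 : p.rep 0 = (u : ℂ) * 0 := by rw [← hu]; simp [Units.smul_def]
      have h1 : p.rep 1 = (u : ℂ) := by rw [← hu]; simp [Units.smul_def]
      first
      | (have h2 : p.rep 2 = (u : ℂ) := by rw [← hu]; simp [Units.smul_def]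
         refine ⟨?_, ?_, ?_⟩ <;> rw [h0, h1, h2] <;> ring)
      | (have h2 : p.rep 2 = -(u : ℂ) := by rw [← hu]; simp [Units.smul_def]
         refine ⟨?_, ?_, ?_⟩ <;> rw [h0, h1, h2] <;> ring)
end

section
/- Let r ∈ ℂ with r ∉ {0, 1, −1}, and let Q = (x² + y² − z²)(x² + r²y² − r²z²)(x² + y² − r²z²) ∈ ℂ[x,y,z]. Then the set of points of the complex projective plane at which all three partial derivatives ∂Q/∂x, ∂Q/∂y, ∂Q/∂z vanish has exactly 6 elements. -/
open MvPolynomial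

noncomputable def e1 (r x y z : ℂ) : ℂ :=
  2*x*((x^2 + r^2*y^2 - r^2*z^2)*(x^2 + y^2 - r^2*z^2)
    + (x^2 + y^2 - z^2)*(x^2 + y^2 - r^2*z^2)
    + (x^2 + y^2 - z^2)*(x^2 + r^2*y^2 - r^2*z^2))

noncomputable def e2 (r x y z : ℂ) : ℂ :=
  2*y*((x^2 + r^2*y^2 - r^2*z^2)*(x^2 + y^2 - r^2*z^2)
    + r^2*((x^2 + y^2 - z^2)*(x^2 + y^2 - r^2*z^2))
    + (x^2 + y^2 - z^2)*(x^2 + r^2*y^2 - r^2*z^2))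

noncomputable def e3 (r x y z : ℂ) : ℂ :=
  -(2*z)*((x^2 + r^2*y^2 - r^2*z^2)*(x^2 + y^2 - r^2*z^2)
    + r^2*((x^2 + y^2 - z^2)*(x^2 + y^2 - r^2*z^2))
    + r^2*((x^2 + y^2 - z^2)*(x^2 + r^2*y^2 - r^2*z^2)))

theorem evAll (r : ℂ) (w : Fin 3 → ℂ) :
    (∀ i : Fin 3, eval w (pderiv i
            ((X 0 ^ 2 + X 1 ^ 2 - X 2 ^ 2) *
              (X 0 ^ 2 + C (r ^ 2) * X 1 ^ 2 - C (r ^ 2) * X 2 ^ 2) *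
              (X 0 ^ 2 + X 1 ^ 2 - C (r ^ 2) * X 2 ^ 2) :
              MvPolynomial (Fin 3) ℂ)) = 0) ↔
    (e1 r (w 0) (w 1) (w 2) = 0 ∧ e2 r (w 0) (w 1) (w 2) = 0 ∧ e3 r (w 0) (w 1) (w 2) = 0) := by
  constructor
  · intro h
    refine ⟨?_, ?_, ?_⟩
    · have := h 0
      rw [show e1 r (w 0) (w 1) (w 2) = eval w (pderiv 0
            ((X 0 ^ 2 + X 1 ^ 2 - X 2 ^ 2) *
              (X 0 ^ 2 + C (r ^ 2) * X 1 ^ 2 - C (r ^ 2) * X 2 ^ 2) *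
              (X 0 ^ 2 + X 1 ^ 2 - C (r ^ 2) * X 2 ^ 2) :
              MvPolynomial (Fin 3) ℂ)) from by
        simp [e1, pderiv_mul, pderiv_pow, pderiv_X, Pi.single_apply]; ring]
      exact this
    · have := h 1
      rw [show e2 r (w 0) (w 1) (w 2) = eval w (pderiv 1
            ((X 0 ^ 2 + X 1 ^ 2 - X 2 ^ 2) *
              (X 0 ^ 2 + C (r ^ 2) * X 1 ^ 2 - C (r ^ 2) * X 2 ^ 2) *
              (X 0 ^ 2 + X 1 ^ 2 - C (r ^ 2) * X 2 ^ 2) :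
              MvPolynomial (Fin 3) ℂ)) from by
        simp [e2, pderiv_mul, pderiv_pow, pderiv_X, Pi.single_apply]; ring]
      exact this
    · have := h 2
      rw [show e3 r (w 0) (w 1) (w 2) = eval w (pderiv 2
            ((X 0 ^ 2 + X 1 ^ 2 - X 2 ^ 2) *
              (X 0 ^ 2 + C (r ^ 2) * X 1 ^ 2 - C (r ^ 2) * X 2 ^ 2) *
              (X 0 ^ 2 + X 1 ^ 2 - C (r ^ 2) * X 2 ^ 2) :
              MvPolynomial (Fin 3) ℂ)) from by
        simp [e3, pderiv_mul, pderiv_pow, pderiv_X, Pi.single_apply]; ring]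
      exact this
  · rintro ⟨h1, h2, h3⟩ i
    fin_cases i
    · simp only [Fin.isValue]
      simp [pderiv_mul, pderiv_pow, pderiv_X, Pi.single_apply]
      simp only [e1] at h1; linear_combination h1
    · simp only [Fin.isValue]
      simp [pderiv_mul, pderiv_pow, pderiv_X, Pi.single_apply]
      simp only [e2] at h2; linear_combination h2
    · simp only [Fin.isValue]
      simp [pderiv_mul, pderiv_pow, pderiv_X, Pi.single_apply]
      simp only [e3] at h3; linear_combination h3
theorem caseAB (r x y z : ℂ) (hr2 : r^2 ≠ 1)
    (hA : x^2 + y^2 - z^2 = 0) (hB : x^2 + r^2*y^2 - r^2*z^2 = 0)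
    (hw : ¬(x = 0 ∧ y = 0 ∧ z = 0)) :
    (x = 0 ∧ z = y ∧ y ≠ 0) ∨ (x = 0 ∧ z = -y ∧ y ≠ 0) := by
  have h : (1 - r^2) * (y^2 - z^2) = 0 := by linear_combination hA - hB
  have h2 : y^2 - z^2 = 0 := by
    rcases mul_eq_zero.mp h with h' | h'
    · exact absurd (by linear_combination -h') hr2
    · exact h'
  have hx0 : x = 0 := pow_eq_zero_iff (by norm_num : 2 ≠ 0) |>.mp (by linear_combination hA - h2)
  have hy0 : y ≠ 0 := by
    intro h0
    have hz0 : z = 0 := pow_eq_zero_iff (by norm_num : 2 ≠ 0) |>.mp (by linear_combination -h2 + y*h0)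
    exact hw ⟨hx0, h0, hz0⟩
  rcases mul_eq_zero.mp (show (z - y) * (z + y) = 0 by linear_combination -h2) with h' | h'
  · exact Or.inl ⟨hx0, sub_eq_zero.mp h', hy0⟩
  · exact Or.inr ⟨hx0, eq_neg_of_add_eq_zero_left h', hy0⟩

theorem caseAC (r x y z : ℂ) (hr2 : r^2 ≠ 1)
    (hA : x^2 + y^2 - z^2 = 0) (hC : x^2 + y^2 - r^2*z^2 = 0)
    (hw : ¬(x = 0 ∧ y = 0 ∧ z = 0)) :
    (x = Complex.I*y ∧ z = 0 ∧ y ≠ 0) ∨ (x = -(Complex.I*y) ∧ z = 0 ∧ y ≠ 0) := by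
  have h : (r^2 - 1) * z^2 = 0 := by linear_combination hA - hC
  have hz0 : z = 0 := by
    rcases mul_eq_zero.mp h with h' | h'
    · exact absurd (by linear_combination h') hr2
    · exact pow_eq_zero_iff (by norm_num : 2 ≠ 0) |>.mp h'
  have hy0 : y ≠ 0 := by
    intro h0
    have hx0 : x = 0 := pow_eq_zero_iff (by norm_num : 2 ≠ 0) |>.mp
      (by linear_combination hA - y*h0 + z*hz0)
    exact hw ⟨hx0, h0, hz0⟩
  have hfac : (x - Complex.I*y) * (x + Complex.I*y) = 0 := by
    linear_combination hA + z*hz0 - y^2*Complex.I_sq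
  rcases mul_eq_zero.mp hfac with h' | h'
  · exact Or.inl ⟨sub_eq_zero.mp h', hz0, hy0⟩
  · exact Or.inr ⟨eq_neg_of_add_eq_zero_left h', hz0, hy0⟩

theorem caseBC (r x y z : ℂ) (hr2 : r^2 ≠ 1)
    (hB : x^2 + r^2*y^2 - r^2*z^2 = 0) (hC : x^2 + y^2 - r^2*z^2 = 0)
    (hw : ¬(x = 0 ∧ y = 0 ∧ z = 0)) :
    (x = r*z ∧ y = 0 ∧ z ≠ 0) ∨ (x = -(r*z) ∧ y = 0 ∧ z ≠ 0) := by
  have h : (r^2 - 1) * y^2 = 0 := by linear_combination hB - hC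
  have hy0 : y = 0 := by
    rcases mul_eq_zero.mp h with h' | h'
    · exact absurd (by linear_combination h') hr2
    · exact pow_eq_zero_iff (by norm_num : 2 ≠ 0) |>.mp h'
  have hz0 : z ≠ 0 := by
    intro h0
    have hx0 : x = 0 := pow_eq_zero_iff (by norm_num : 2 ≠ 0) |>.mp
      (by linear_combination hC - y*hy0 + r^2*z*h0)
    exact hw ⟨hx0, hy0, h0⟩
  have hfac : (x - r*z) * (x + r*z) = 0 := by
    linear_combination hC - y*hy0
  rcases mul_eq_zero.mp hfac with h' | h'
  · exact Or.inl ⟨sub_eq_zero.mp h', hy0, hz0⟩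
  · exact Or.inr ⟨eq_neg_of_add_eq_zero_left h', hy0, hz0⟩
theorem classify (r x y z : ℂ) (hr0 : r ≠ 0) (hr2 : r^2 ≠ 1)
    (h1 : e1 r x y z = 0) (h2 : e2 r x y z = 0) (h3 : e3 r x y z = 0)
    (hw : ¬(x = 0 ∧ y = 0 ∧ z = 0)) :
    (x = 0 ∧ z = y ∧ y ≠ 0) ∨ (x = 0 ∧ z = -y ∧ y ≠ 0) ∨
    (x = Complex.I*y ∧ z = 0 ∧ y ≠ 0) ∨ (x = -(Complex.I*y) ∧ z = 0 ∧ y ≠ 0) ∨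
    (x = r*z ∧ y = 0 ∧ z ≠ 0) ∨ (x = -(r*z) ∧ y = 0 ∧ z ≠ 0) := by
  have hr20 : r^2 ≠ 0 := pow_ne_zero 2 hr0
  simp only [e1] at h1
  simp only [e2] at h2
  simp only [e3] at h3
  have hABC : (x^2 + y^2 - z^2) * ((x^2 + r^2*y^2 - r^2*z^2) * (x^2 + y^2 - r^2*z^2)) = 0 := by
    linear_combination (x/6)*h1 + (y/6)*h2 + (z/6)*h3
  rcases mul_eq_zero.mp hABC with hA | hBC0
  · -- A = 0
    have hx : x * ((x^2 + r^2*y^2 - r^2*z^2)*(x^2 + y^2 - r^2*z^2)) = 0 := by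
      linear_combination (1/2)*h1 - (x*((x^2 + y^2 - r^2*z^2)+(x^2 + r^2*y^2 - r^2*z^2)))*hA
    have hy : y * ((x^2 + r^2*y^2 - r^2*z^2)*(x^2 + y^2 - r^2*z^2)) = 0 := by
      linear_combination (1/2)*h2 - (y*(r^2*(x^2 + y^2 - r^2*z^2)+(x^2 + r^2*y^2 - r^2*z^2)))*hA
    have hz : z * ((x^2 + r^2*y^2 - r^2*z^2)*(x^2 + y^2 - r^2*z^2)) = 0 := by
      linear_combination (-(1/2))*h3 - (z*(r^2*(x^2 + y^2 - r^2*z^2)+r^2*(x^2 + r^2*y^2 - r^2*z^2)))*hA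
    have hBC : (x^2 + r^2*y^2 - r^2*z^2)*(x^2 + y^2 - r^2*z^2) = 0 := by
      by_contra hne
      exact hw ⟨(mul_eq_zero.mp hx).resolve_right hne,
        (mul_eq_zero.mp hy).resolve_right hne, (mul_eq_zero.mp hz).resolve_right hne⟩
    rcases mul_eq_zero.mp hBC with hB | hC
    · rcases caseAB r x y z hr2 hA hB hw with h | h
      · exact Or.inl h
      · exact Or.inr (Or.inl h)
    · rcases caseAC r x y z hr2 hA hC hw with h | h
      · exact Or.inr (Or.inr (Or.inl h))
      · exact Or.inr (Or.inr (Or.inr (Or.inl h)))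
  · rcases mul_eq_zero.mp hBC0 with hB | hC
    · -- B = 0
      have hx : x * ((x^2 + y^2 - z^2)*(x^2 + y^2 - r^2*z^2)) = 0 := by
        linear_combination (1/2)*h1 - (x*((x^2 + y^2 - r^2*z^2)+(x^2 + y^2 - z^2)))*hB
      have hy : r^2 * (y * ((x^2 + y^2 - z^2)*(x^2 + y^2 - r^2*z^2))) = 0 := by
        linear_combination (1/2)*h2 - (y*((x^2 + y^2 - r^2*z^2)+(x^2 + y^2 - z^2)))*hB
      have hz : r^2 * (z * ((x^2 + y^2 - z^2)*(x^2 + y^2 - r^2*z^2))) = 0 := by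
        linear_combination (-(1/2))*h3 - (z*((x^2 + y^2 - r^2*z^2)+r^2*(x^2 + y^2 - z^2)))*hB
      have hy' : y * ((x^2 + y^2 - z^2)*(x^2 + y^2 - r^2*z^2)) = 0 :=
        (mul_eq_zero.mp hy).resolve_left hr20
      have hz' : z * ((x^2 + y^2 - z^2)*(x^2 + y^2 - r^2*z^2)) = 0 :=
        (mul_eq_zero.mp hz).resolve_left hr20
      have hAC : (x^2 + y^2 - z^2)*(x^2 + y^2 - r^2*z^2) = 0 := by
        by_contra hne
        exact hw ⟨(mul_eq_zero.mp hx).resolve_right hne,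
          (mul_eq_zero.mp hy').resolve_right hne, (mul_eq_zero.mp hz').resolve_right hne⟩
      rcases mul_eq_zero.mp hAC with hA | hC
      · rcases caseAB r x y z hr2 hA hB hw with h | h
        · exact Or.inl h
        · exact Or.inr (Or.inl h)
      · rcases caseBC r x y z hr2 hB hC hw with h | h
        · exact Or.inr (Or.inr (Or.inr (Or.inr (Or.inl h))))
        · exact Or.inr (Or.inr (Or.inr (Or.inr (Or.inr h))))
    · -- C = 0
      have hx : x * ((x^2 + y^2 - z^2)*(x^2 + r^2*y^2 - r^2*z^2)) = 0 := by
        linear_combination (1/2)*h1 - (x*((x^2 + r^2*y^2 - r^2*z^2)+(x^2 + y^2 - z^2)))*hC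
      have hy : y * ((x^2 + y^2 - z^2)*(x^2 + r^2*y^2 - r^2*z^2)) = 0 := by
        linear_combination (1/2)*h2 - (y*((x^2 + r^2*y^2 - r^2*z^2)+r^2*(x^2 + y^2 - z^2)))*hC
      have hz : r^2 * (z * ((x^2 + y^2 - z^2)*(x^2 + r^2*y^2 - r^2*z^2))) = 0 := by
        linear_combination (-(1/2))*h3 - (z*((x^2 + r^2*y^2 - r^2*z^2)+r^2*(x^2 + y^2 - z^2)))*hC
      have hz' : z * ((x^2 + y^2 - z^2)*(x^2 + r^2*y^2 - r^2*z^2)) = 0 :=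
        (mul_eq_zero.mp hz).resolve_left hr20
      have hAB : (x^2 + y^2 - z^2)*(x^2 + r^2*y^2 - r^2*z^2) = 0 := by
        by_contra hne
        exact hw ⟨(mul_eq_zero.mp hx).resolve_right hne,
          (mul_eq_zero.mp hy).resolve_right hne, (mul_eq_zero.mp hz').resolve_right hne⟩
      rcases mul_eq_zero.mp hAB with hA | hB
      · rcases caseAC r x y z hr2 hA hC hw with h | h
        · exact Or.inr (Or.inr (Or.inl h))
        · exact Or.inr (Or.inr (Or.inr (Or.inl h)))
      · rcases caseBC r x y z hr2 hB hC hw with h | h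
        · exact Or.inr (Or.inr (Or.inr (Or.inr (Or.inl h))))
        · exact Or.inr (Or.inr (Or.inr (Or.inr (Or.inr h))))
noncomputable def P₁ : Projectivization ℂ (Fin 3 → ℂ) :=
  Projectivization.mk ℂ ![0,1,1] (fun h => by simpa using congrFun h 1)
noncomputable def P₂ : Projectivization ℂ (Fin 3 → ℂ) :=
  Projectivization.mk ℂ ![0,1,-1] (fun h => by simpa using congrFun h 1)
noncomputable def P₃ : Projectivization ℂ (Fin 3 → ℂ) :=
  Projectivization.mk ℂ ![Complex.I,1,0] (fun h => by simpa using congrFun h 1)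
noncomputable def P₄ : Projectivization ℂ (Fin 3 → ℂ) :=
  Projectivization.mk ℂ ![-Complex.I,1,0] (fun h => by simpa using congrFun h 1)
noncomputable def P₅ (r : ℂ) : Projectivization ℂ (Fin 3 → ℂ) :=
  Projectivization.mk ℂ ![r,0,1] (fun h => by simpa using congrFun h 2)
noncomputable def P₆ (r : ℂ) : Projectivization ℂ (Fin 3 → ℂ) :=
  Projectivization.mk ℂ ![-r,0,1] (fun h => by simpa using congrFun h 2)

theorem scale1 (r a x y z : ℂ) : e1 r (a*x) (a*y) (a*z) = a^5 * e1 r x y z := by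
  simp only [e1]; ring

theorem scale2 (r a x y z : ℂ) : e2 r (a*x) (a*y) (a*z) = a^5 * e2 r x y z := by
  simp only [e2]; ring

theorem scale3 (r a x y z : ℂ) : e3 r (a*x) (a*y) (a*z) = a^5 * e3 r x y z := by
  simp only [e3]; ring

theorem cond_mk (r : ℂ) (v : Fin 3 → ℂ) (hv : v ≠ 0)
    (H1 : e1 r (v 0) (v 1) (v 2) = 0) (H2 : e2 r (v 0) (v 1) (v 2) = 0)
    (H3 : e3 r (v 0) (v 1) (v 2) = 0) :
    e1 r ((Projectivization.mk ℂ v hv).rep 0) ((Projectivization.mk ℂ v hv).rep 1)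
        ((Projectivization.mk ℂ v hv).rep 2) = 0 ∧
    e2 r ((Projectivization.mk ℂ v hv).rep 0) ((Projectivization.mk ℂ v hv).rep 1)
        ((Projectivization.mk ℂ v hv).rep 2) = 0 ∧
    e3 r ((Projectivization.mk ℂ v hv).rep 0) ((Projectivization.mk ℂ v hv).rep 1)
        ((Projectivization.mk ℂ v hv).rep 2) = 0 := by
  obtain ⟨a, ha⟩ := Projectivization.exists_smul_eq_mk_rep ℂ v hv
  have h0 : (Projectivization.mk ℂ v hv).rep 0 = (a : ℂ) * v 0 := by
    rw [← ha]; simp [Units.smul_def]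
  have h1 : (Projectivization.mk ℂ v hv).rep 1 = (a : ℂ) * v 1 := by
    rw [← ha]; simp [Units.smul_def]
  have h2 : (Projectivization.mk ℂ v hv).rep 2 = (a : ℂ) * v 2 := by
    rw [← ha]; simp [Units.smul_def]
  rw [h0, h1, h2, scale1, scale2, scale3, H1, H2, H3]
  simp
theorem singAC (r x : ℂ) (hx : x^2 = -1) :
    e1 r x 1 0 = 0 ∧ e2 r x 1 0 = 0 ∧ e3 r x 1 0 = 0 := by
  refine ⟨?_, ?_, ?_⟩
  · simp only [e1]; linear_combination (2*x*(3*x^2+2*r^2+1))*hx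
  · simp only [e2]; linear_combination (2*(2*(x^2+r^2)+r^2*(x^2+1)))*hx
  · simp only [e3]; ring

theorem ne12 : P₁ ≠ P₂ := by
  rw [P₁, P₂, Ne, Projectivization.mk_eq_mk_iff]
  rintro ⟨a, ha⟩
  have h1 := congrFun ha 1
  have h2 := congrFun ha 2
  simp [Units.smul_def] at h1 h2
  rw [h1] at h2
  norm_num at h2

theorem ne13 : P₁ ≠ P₃ := by
  rw [P₁, P₃, Ne, Projectivization.mk_eq_mk_iff]
  rintro ⟨a, ha⟩
  have h2 := congrFun ha 2
  simp [Units.smul_def] at h2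

theorem ne14 : P₁ ≠ P₄ := by
  rw [P₁, P₄, Ne, Projectivization.mk_eq_mk_iff]
  rintro ⟨a, ha⟩
  have h2 := congrFun ha 2
  simp [Units.smul_def] at h2

theorem ne15 (r : ℂ) : P₁ ≠ P₅ r := by
  rw [P₁, P₅, Ne, Projectivization.mk_eq_mk_iff]
  rintro ⟨a, ha⟩
  have h1 := congrFun ha 1
  simp [Units.smul_def] at h1

theorem ne16 (r : ℂ) : P₁ ≠ P₆ r := by
  rw [P₁, P₆, Ne, Projectivization.mk_eq_mk_iff]
  rintro ⟨a, ha⟩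
  have h1 := congrFun ha 1
  simp [Units.smul_def] at h1

theorem ne23 : P₂ ≠ P₃ := by
  rw [P₂, P₃, Ne, Projectivization.mk_eq_mk_iff]
  rintro ⟨a, ha⟩
  have h2 := congrFun ha 2
  simp [Units.smul_def] at h2

theorem ne24 : P₂ ≠ P₄ := by
  rw [P₂, P₄, Ne, Projectivization.mk_eq_mk_iff]
  rintro ⟨a, ha⟩
  have h2 := congrFun ha 2
  simp [Units.smul_def] at h2

theorem ne25 (r : ℂ) : P₂ ≠ P₅ r := by
  rw [P₂, P₅, Ne, Projectivization.mk_eq_mk_iff]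
  rintro ⟨a, ha⟩
  have h1 := congrFun ha 1
  simp [Units.smul_def] at h1

theorem ne26 (r : ℂ) : P₂ ≠ P₆ r := by
  rw [P₂, P₆, Ne, Projectivization.mk_eq_mk_iff]
  rintro ⟨a, ha⟩
  have h1 := congrFun ha 1
  simp [Units.smul_def] at h1

theorem ne34 : P₃ ≠ P₄ := by
  rw [P₃, P₄, Ne, Projectivization.mk_eq_mk_iff]
  rintro ⟨a, ha⟩
  have h0 := congrFun ha 0
  have h1 := congrFun ha 1
  simp [Units.smul_def] at h0 h1
  rw [h1] at h0
  simp [Complex.ext_iff] at h0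
  norm_num at h0

theorem ne35 (r : ℂ) : P₃ ≠ P₅ r := by
  rw [P₃, P₅, Ne, Projectivization.mk_eq_mk_iff]
  rintro ⟨a, ha⟩
  have h1 := congrFun ha 1
  simp [Units.smul_def] at h1

theorem ne36 (r : ℂ) : P₃ ≠ P₆ r := by
  rw [P₃, P₆, Ne, Projectivization.mk_eq_mk_iff]
  rintro ⟨a, ha⟩
  have h1 := congrFun ha 1
  simp [Units.smul_def] at h1

theorem ne45 (r : ℂ) : P₄ ≠ P₅ r := by
  rw [P₄, P₅, Ne, Projectivization.mk_eq_mk_iff]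
  rintro ⟨a, ha⟩
  have h1 := congrFun ha 1
  simp [Units.smul_def] at h1

theorem ne46 (r : ℂ) : P₄ ≠ P₆ r := by
  rw [P₄, P₆, Ne, Projectivization.mk_eq_mk_iff]
  rintro ⟨a, ha⟩
  have h1 := congrFun ha 1
  simp [Units.smul_def] at h1

theorem ne56 (r : ℂ) (hr0 : r ≠ 0) : P₅ r ≠ P₆ r := by
  rw [P₅, P₆, Ne, Projectivization.mk_eq_mk_iff]
  rintro ⟨a, ha⟩
  have h0 := congrFun ha 0
  have h2 := congrFun ha 2
  simp [Units.smul_def] at h0 h2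
  rw [h2] at h0
  simp only [Units.val_one, one_mul] at h0
  exact hr0 (by linear_combination -h0/2)
/-- Megyesi's three-conic arrangement: for `r ∉ {0, 1, −1}` the singular locus of
`Q = (x² + y² − z²)(x² + r²y² − r²z²)(x² + y² − r²z²)` in the complex projective plane has
exactly 6 elements (the six tacnodes). -/
theorem three_conic_arrangement_six_singular_points (r : ℂ) (hr0 : r ≠ 0) (hr1 : r ≠ 1)
    (hrm1 : r ≠ -1) :
    {p : Projectivization ℂ (Fin 3 → ℂ) |
        ∀ i : Fin 3,
          eval p.rep (pderiv i
            ((X 0 ^ 2 + X 1 ^ 2 - X 2 ^ 2) *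
              (X 0 ^ 2 + C (r ^ 2) * X 1 ^ 2 - C (r ^ 2) * X 2 ^ 2) *
              (X 0 ^ 2 + X 1 ^ 2 - C (r ^ 2) * X 2 ^ 2) :
              MvPolynomial (Fin 3) ℂ)) = 0}.ncard = 6 := by
  have hr2 : r^2 ≠ 1 := by
    intro h
    rcases mul_eq_zero.mp (show (r-1)*(r+1) = 0 by linear_combination h) with h'|h'
    · exact hr1 (by linear_combination h')
    · exact hrm1 (by linear_combination h')
  have hS : {p : Projectivization ℂ (Fin 3 → ℂ) |
        ∀ i : Fin 3,
          eval p.rep (pderiv i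
            ((X 0 ^ 2 + X 1 ^ 2 - X 2 ^ 2) *
              (X 0 ^ 2 + C (r ^ 2) * X 1 ^ 2 - C (r ^ 2) * X 2 ^ 2) *
              (X 0 ^ 2 + X 1 ^ 2 - C (r ^ 2) * X 2 ^ 2) :
              MvPolynomial (Fin 3) ℂ)) = 0} = {P₁, P₂, P₃, P₄, P₅ r, P₆ r} := by
    ext p
    rw [Set.mem_setOf_eq, evAll r p.rep]
    simp only [Set.mem_insert_iff, Set.mem_singleton_iff]
    constructor
    · rintro ⟨h1, h2, h3⟩
      have hw : ¬(p.rep 0 = 0 ∧ p.rep 1 = 0 ∧ p.rep 2 = 0) := by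
        rintro ⟨a0, a1, a2⟩
        exact p.rep_nonzero (funext fun i => by fin_cases i <;> assumption)
      rcases classify r _ _ _ hr0 hr2 h1 h2 h3 hw with
        ⟨hx,hz,hy⟩|⟨hx,hz,hy⟩|⟨hx,hz,hy⟩|⟨hx,hz,hy⟩|⟨hx,hy,hz⟩|⟨hx,hy,hz⟩
      · refine Or.inl ?_
        rw [P₁]
        conv_lhs => rw [← p.mk_rep]
        rw [Projectivization.mk_eq_mk_iff]
        exact ⟨Units.mk0 (p.rep 1) hy,
          funext fun i => by fin_cases i <;> simp [Units.smul_def, hx, hz] <;> ring⟩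
      · refine Or.inr (Or.inl ?_)
        rw [P₂]
        conv_lhs => rw [← p.mk_rep]
        rw [Projectivization.mk_eq_mk_iff]
        exact ⟨Units.mk0 (p.rep 1) hy,
          funext fun i => by fin_cases i <;> simp [Units.smul_def, hx, hz] <;> ring⟩
      · refine Or.inr (Or.inr (Or.inl ?_))
        rw [P₃]
        conv_lhs => rw [← p.mk_rep]
        rw [Projectivization.mk_eq_mk_iff]
        exact ⟨Units.mk0 (p.rep 1) hy,
          funext fun i => by fin_cases i <;> simp [Units.smul_def, hx, hz] <;> ring⟩
      · refine Or.inr (Or.inr (Or.inr (Or.inl ?_)))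
        rw [P₄]
        conv_lhs => rw [← p.mk_rep]
        rw [Projectivization.mk_eq_mk_iff]
        exact ⟨Units.mk0 (p.rep 1) hy,
          funext fun i => by fin_cases i <;> simp [Units.smul_def, hx, hz] <;> ring⟩
      · refine Or.inr (Or.inr (Or.inr (Or.inr (Or.inl ?_))))
        rw [P₅]
        conv_lhs => rw [← p.mk_rep]
        rw [Projectivization.mk_eq_mk_iff]
        exact ⟨Units.mk0 (p.rep 2) hz,
          funext fun i => by fin_cases i <;> simp [Units.smul_def, hx, hy] <;> ring⟩
      · refine Or.inr (Or.inr (Or.inr (Or.inr (Or.inr ?_))))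
        rw [P₆]
        conv_lhs => rw [← p.mk_rep]
        rw [Projectivization.mk_eq_mk_iff]
        exact ⟨Units.mk0 (p.rep 2) hz,
          funext fun i => by fin_cases i <;> simp [Units.smul_def, hx, hy] <;> ring⟩
    · rintro (rfl|rfl|rfl|rfl|rfl|rfl)
      · rw [P₁]
        exact cond_mk r _ _ (show e1 r 0 1 1 = 0 by simp only [e1]; ring)
          (show e2 r 0 1 1 = 0 by simp only [e2]; ring)
          (show e3 r 0 1 1 = 0 by simp only [e3]; ring)
      · rw [P₂]
        exact cond_mk r _ _ (show e1 r 0 1 (-1) = 0 by simp only [e1]; ring)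
          (show e2 r 0 1 (-1) = 0 by simp only [e2]; ring)
          (show e3 r 0 1 (-1) = 0 by simp only [e3]; ring)
      · rw [P₃]
        obtain ⟨H1, H2, H3⟩ := singAC r Complex.I Complex.I_sq
        exact cond_mk r _ _ H1 H2 H3
      · rw [P₄]
        obtain ⟨H1, H2, H3⟩ := singAC r (-Complex.I) (by rw [neg_pow]; simp [Complex.I_sq])
        exact cond_mk r _ _ H1 H2 H3
      · rw [P₅]
        exact cond_mk r _ _ (show e1 r r 0 1 = 0 by simp only [e1]; ring)
          (show e2 r r 0 1 = 0 by simp only [e2]; ring)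
          (show e3 r r 0 1 = 0 by simp only [e3]; ring)
      · rw [P₆]
        exact cond_mk r _ _ (show e1 r (-r) 0 1 = 0 by simp only [e1]; ring)
          (show e2 r (-r) 0 1 = 0 by simp only [e2]; ring)
          (show e3 r (-r) 0 1 = 0 by simp only [e3]; ring)
  rw [hS]
  rw [Set.ncard_insert_of_notMem (by simp [ne12, ne13, ne14, ne15 r, ne16 r]),
    Set.ncard_insert_of_notMem (by simp [ne23, ne24, ne25 r, ne26 r]),
    Set.ncard_insert_of_notMem (by simp [ne34, ne35 r, ne36 r]),
    Set.ncard_insert_of_notMem (by simp [ne45 r, ne46 r]),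
    Set.ncard_insert_of_notMem (by simp [ne56 r hr0]),
    Set.ncard_singleton]
end
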